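/- A Kripke frame F = (W, R, R_D) validates the formula D_□ := ([≠]p ∧ p) → □p if and only if R ⊆ R_D ∪ Id_W. -/

import Mathlib

/-! If `R ⊆ R_D ∪ Id`, every `R`-successor of a world `x` is `x` itself or an `R_D`-successor
of `x`, and `p` holds at both kinds of worlds by the antecedent `[≠]p ∧ p`. Conversely, the
valuation making `p` true exactly at `x` and its `R_D`-successors satisfies the antecedent at `x`,
so validity forces `p`, i.e. membership in `R_D ∪ Id`, at every `R`-successor of `x`. -/

inductive Formula : Type where
  | var : Nat → Formula
  | bot : Formula
  | imp : Formula → Formula → Formula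
  | box : Formula → Formula
  | dbox : Formula → Formula

def Formula.neg (φ : Formula) : Formula := .imp φ .bot
def Formula.and (φ ψ : Formula) : Formula := .neg (.imp φ (.neg ψ))
def Formula.or (φ ψ : Formula) : Formula := .imp (.neg φ) ψ
def Formula.ddiam (φ : Formula) : Formula := .neg (.dbox (.neg φ))

/-- AT0 := (p ∧ [≠]¬p ∧ ⟨≠⟩(q ∧ [≠]¬q)) → (□¬q ∨ ⟨≠⟩(q ∧ □¬p)), with p = var 0, q = var 1. -/
def AT0 : Formula :=
  .imp (.and (.and (.var 0) (.dbox (.neg (.var 0))))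
             (.ddiam (.and (.var 1) (.dbox (.neg (.var 1))))))
       (.or (.box (.neg (.var 1))) (.ddiam (.and (.var 1) (.box (.neg (.var 0))))))

/-- Kripke semantics for the bimodal language: `□` via `R`, `[≠]` via `RD`. -/
def ksat {W : Type*} (R RD : W → W → Prop) (V : Nat → Set W) : W → Formula → Prop
  | x, .var p => x ∈ V p
  | _, .bot => False
  | x, .imp φ ψ => ksat R RD V x φ → ksat R RD V x ψ
  | x, .box φ => ∀ y, R x y → ksat R RD V y φ
  | x, .dbox φ => ∀ y, RD x y → ksat R RD V y φ

/-- D_□ := ([≠]p ∧ p) → □p. -/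
def Dsq : Formula := .imp (.and (.dbox (.var 0)) (.var 0)) (.box (.var 0))

section Semantics

variable {W : Type*} {R RD : W → W → Prop}

theorem ksat_neg {V : Nat → Set W} {x : W} {φ : Formula} :
    ksat R RD V x φ.neg ↔ ¬ ksat R RD V x φ := Iff.rfl

theorem ksat_and {V : Nat → Set W} {x : W} {φ ψ : Formula} :
    ksat R RD V x (φ.and ψ) ↔ ksat R RD V x φ ∧ ksat R RD V x ψ := by
  simp only [Formula.and, ksat_neg, ksat]
  tauto

theorem ksat_Dsq_iff {V : Nat → Set W} {x : W} :
    ksat R RD V x Dsq ↔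
      ((∀ y, RD x y → y ∈ V 0) ∧ x ∈ V 0 → ∀ y, R x y → y ∈ V 0) := by
  simp only [Dsq, ksat_and, ksat]

theorem ksat_Dsq_of_rel_or_eq (h : ∀ x y, R x y → RD x y ∨ x = y)
    (V : Nat → Set W) (x : W) : ksat R RD V x Dsq := by
  rw [ksat_Dsq_iff]
  rintro ⟨hD, hx⟩ y hxy
  rcases h x y hxy with hRD | rfl
  · exact hD y hRD
  · exact hx

theorem rel_or_eq_of_ksat_Dsq (h : ∀ (V : Nat → Set W) (x : W), ksat R RD V x Dsq)
    (x y : W) (hxy : R x y) : RD x y ∨ x = y := by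
  have hDsq := ksat_Dsq_iff.mp (h (fun _ => {z | RD x z ∨ x = z}) x)
  exact hDsq ⟨fun z hz => Or.inl hz, Or.inr rfl⟩ y hxy

end Semantics

/-- A frame validates D_□ iff `R ⊆ RD ∪ Id`. -/
theorem stmt5 {W : Type*} (R RD : W → W → Prop) :
    (∀ (V : Nat → Set W) (x : W), ksat R RD V x Dsq) ↔
      ∀ x y : W, R x y → RD x y ∨ x = y :=
  ⟨rel_or_eq_of_ksat_Dsq, ksat_Dsq_of_rel_or_eq⟩
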